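/- For every natural number n ≥ 1, the value n*(n+1)/2 - 1 is the greatest value of qcost over all lists l : List ℤ of length n: every such list satisfies qcost l ≤ n*(n+1)/2 - 1, and there exists a list of length n (e.g. the strictly decreasing list [n, n-1, …, 1]) attaining this value. -/

import Mathlib

/-- Cost of the paper's simple QuickSort: each call on a list of length `N ≥ 2`
costs `N`, plus the cost of recursive calls on the strict-left and strict-right
partitions of the tail around the pivot `l.head!`. -/
def qcost (l : List ℤ) : ℕ :=
  if _h : l.length ≤ 1 then 0
  else
    l.length + qcost (l.tail.filter (· < l.head!)) + qcost (l.tail.filter (· > l.head!))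
termination_by l.length
decreasing_by
  · calc (l.tail.filter (· < l.head!)).length ≤ l.tail.length := List.length_filter_le _ _
      _ < l.length := by rw [List.length_tail]; omega
  · calc (l.tail.filter (· > l.head!)).length ≤ l.tail.length := List.length_filter_le _ _
      _ < l.length := by rw [List.length_tail]; omega


/-! A call on a list of length `n ≥ 2` costs `n`, and its two partitions have total length at
most `n - 1`. Since `T m = m (m + 1) / 2` satisfies `T a + T c + n ≤ T n` whenever `a + c < n`,
strong induction on the length gives `qcost l ≤ T n - 1`. On a strictly decreasing list every
pivot is the maximum, so the right partition is always empty and the cost is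
`n + (n - 1) + ⋯ + 2 = T n - 1`. -/

theorem List.length_filter_add_length_filter_le {α : Type*} {p q : α → Bool}
    (hpq : ∀ a, q a → ¬ p a) (l : List α) :
    (l.filter p).length + (l.filter q).length ≤ l.length := by
  rw [l.length_eq_length_filter_add p]
  gcongr
  exact (l.monotone_filter_right fun a ha => by simpa using hpq a ha).length_le

lemma qcost_of_length_le_one {l : List ℤ} (hl : l.length ≤ 1) : qcost l = 0 := by
  rw [qcost, dif_pos hl]

@[simp]
lemma qcost_nil : qcost [] = 0 :=
  qcost_of_length_le_one (Nat.zero_le 1)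

lemma qcost_cons_of_ne_nil (x : ℤ) {t : List ℤ} (ht : t ≠ []) :
    qcost (x :: t) = (t.length + 1) + qcost (t.filter (· < x)) + qcost (t.filter (· > x)) := by
  have : ¬ (x :: t).length ≤ 1 := by simpa [List.length_pos_iff] using ht
  rw [qcost, dif_neg this]
  rfl

lemma add_triangle_pred_le {a c n : ℕ} (hn : 2 ≤ n) (h : a + c < n) :
    n + (a * (a + 1) / 2 - 1) + (c * (c + 1) / 2 - 1) ≤ n * (n + 1) / 2 - 1 := by
  have two_mul_triangle (m : ℕ) : 2 * (m * (m + 1) / 2) = m * (m + 1) :=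
    Nat.mul_div_cancel' (Nat.even_mul_succ_self m).two_dvd
  have hA := two_mul_triangle a
  have hC := two_mul_triangle c
  have hN := two_mul_triangle n
  have hsum : a * (a + 1) + c * (c + 1) + 2 * n ≤ n * (n + 1) := by nlinarith
  have hn' : 2 * n + 2 ≤ n * (n + 1) := by nlinarith
  -- an empty side contributes `0 - 1 = 0`, so the cases `m * (m + 1) = 0` and `≥ 2` differ
  have zero_or_two_le (m : ℕ) : m * (m + 1) = 0 ∨ 2 ≤ m * (m + 1) := by
    rcases m with _ | m
    · simp
    · right; nlinarith
  have ha := zero_or_two_le a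
  have hc := zero_or_two_le c
  generalize a * (a + 1) = A at *
  generalize c * (c + 1) = C at *
  generalize n * (n + 1) = N at *
  omega

lemma succ_add_triangle_pred {m : ℕ} (hm : 0 < m) :
    m + 1 + (m * (m + 1) / 2 - 1) = (m + 1) * (m + 1 + 1) / 2 - 1 := by
  rw [show (m + 1) * (m + 1 + 1) = m * (m + 1) + 2 * (m + 1) by ring,
    Nat.add_mul_div_left _ _ two_pos]
  have : 1 ≤ m * (m + 1) / 2 := (Nat.le_div_iff_mul_le two_pos).2 (by nlinarith)
  omega

theorem qcost_le_triangle_pred (l : List ℤ) : qcost l ≤ l.length * (l.length + 1) / 2 - 1 := by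
  match l with
  | [] => simp
  | x :: t =>
    rcases eq_or_ne t [] with rfl | ht
    · simp [qcost_of_length_le_one]
    have hsplit : (t.filter (· < x)).length + (t.filter (· > x)).length ≤ t.length :=
      List.length_filter_add_length_filter_le
        (fun _ h₁ h₂ => lt_asymm (of_decide_eq_true h₁) (of_decide_eq_true h₂)) t
    have hL := qcost_le_triangle_pred (t.filter (· < x))
    have hR := qcost_le_triangle_pred (t.filter (· > x))
    rw [qcost_cons_of_ne_nil x ht]
    exact (add_le_add (add_le_add le_rfl hL) hR).trans
      (add_triangle_pred_le (Nat.succ_le_succ (List.length_pos_iff.2 ht)) (by omega))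
termination_by l.length
decreasing_by
  all_goals exact Nat.lt_succ_of_le (List.length_filter_le _ _)

theorem qcost_of_pairwise_gt {l : List ℤ} (hl : l.Pairwise (· > ·)) :
    qcost l = l.length * (l.length + 1) / 2 - 1 := by
  induction l with
  | nil => simp
  | cons x t ih =>
    rw [List.pairwise_cons] at hl
    rcases eq_or_ne t [] with rfl | ht
    · simp [qcost_of_length_le_one]
    have hlt : t.filter (· < x) = t := List.filter_eq_self.2 fun y hy => by simpa using hl.1 y hy
    have hgt : t.filter (· > x) = [] :=
      List.filter_eq_nil_iff.2 fun y hy => by simpa using (hl.1 y hy).le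
    rw [qcost_cons_of_ne_nil x ht, hlt, hgt, ih hl.2, qcost_nil]
    exact succ_add_triangle_pred (List.length_pos_iff.2 ht)

theorem qcost_worst_case_general (n : ℕ) :
    (∀ l : List ℤ, l.length = n → qcost l ≤ n * (n + 1) / 2 - 1) ∧
    (∃ l : List ℤ, l.length = n ∧ qcost l = n * (n + 1) / 2 - 1) := by
  refine ⟨fun l hl => hl ▸ qcost_le_triangle_pred l, ?_⟩
  let l : List ℤ := (List.range n).map fun i : ℕ => (n : ℤ) - i
  have hl : l.Pairwise (· > ·) := List.pairwise_map.2 (List.pairwise_lt_range.imp fun h => by omega)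
  exact ⟨l, by simp [l], by simpa [l] using qcost_of_pairwise_gt hl⟩

/-- Exact worst-case analysis of simple QuickSort: for `n ≥ 1`, the value
`n*(n+1)/2 - 1` is the greatest cost over all inputs of length `n`, and it
is attained by some input of length `n`. -/
theorem qcost_worst_case (n : ℕ) (hn : 1 ≤ n) :
    (∀ l : List ℤ, l.length = n → qcost l ≤ n * (n + 1) / 2 - 1) ∧
    (∃ l : List ℤ, l.length = n ∧ qcost l = n * (n + 1) / 2 - 1) :=
  qcost_worst_case_general n
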